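/- Max-min as an LP: the problem max_{Q∈C} min_{x∈X} x^T(r(Q) + M(Q)^T Û) has the same optimal value as the linear program: maximize -d^T y + z over variables Q, y, z, r, M, S, s, K subject to M = Σ_k G_k ⊙ (1(Qe_k)^T), r = (R ⊙ Q)1, -y + z·1 ≤ r + M^T Û, K = M + S + s·1^T, s + d ≥ K d, Q1 = 1, Q ≥ 0, y ≥ 0, S ≥ 0, K ≥ 0. -/

import Mathlib

/-!
For fixed `Q` the inner minimum is a linear program over the capped simplex `X`, whose dual is
`max {-dᵀy + z : y ≥ 0, z𝟙 - y ≤ c}`. Strong duality is shown by hand: at a minimiser `x`, an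
exchange of mass between two coordinates shows that `x` saturates the cap `d` on every coordinate
where `c` lies below the threshold `t = max {c j : x j > 0}`, so `y = (t - c)⁺`, `z = t` attains
`xᵀc`. Applied row by row to `max_{x ∈ X} M x ≤ d`, the same duality turns membership in `C` into
the existence of the certificate `(S, K, s)`, and the two optimisation problems have the same
feasible values up to domination.
-/

open Matrix Finset

/-- Row-stochastic policy matrix. -/
def rowStoch {n p : ℕ} (Q : Fin n → Fin p → ℝ) : Prop :=
  (∀ s a, 0 ≤ Q s a) ∧ ∀ s, ∑ a, Q s a = 1

/-- Column-stochastic matrix. -/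
def colStoch {n : ℕ} (M : Matrix (Fin n) (Fin n) ℝ) : Prop :=
  (∀ i j, 0 ≤ M i j) ∧ ∀ j, ∑ i, M i j = 1

/-- Capped probability simplex `X = {x : 0 ≤ x ≤ d, 1ᵀx = 1}`. -/
def capped (n : ℕ) (d : Fin n → ℝ) : Set (Fin n → ℝ) :=
  {x | (∀ i, 0 ≤ x i) ∧ (∀ i, x i ≤ d i) ∧ ∑ i, x i = 1}

/-- Transition matrix `M(Q) = ∑ₖ Gₖ ⊙ (1 (Q eₖ)ᵀ)`, entrywise
`M(Q)[i,j] = ∑ₐ Q[j,a] p(i|j,a)` where `prob i j a = p(i|j,a)`. -/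
def Mof {n p : ℕ} (prob : Fin n → Fin n → Fin p → ℝ) (Q : Fin n → Fin p → ℝ) :
    Matrix (Fin n) (Fin n) ℝ :=
  Matrix.of fun i j => ∑ a, Q j a * prob i j a

/-- Expected reward vector `r(Q) = (R ⊙ Q)1`. -/
def rvec {n p : ℕ} (R : Fin n → Fin p → ℝ) (Q : Fin n → Fin p → ℝ) : Fin n → ℝ :=
  fun s => ∑ a, Q s a * R s a

section CappedSimplex

variable {n : ℕ} {d : Fin n → ℝ}

theorem capped_nonempty (hd : ∀ i, 0 ≤ d i) (hds : 1 ≤ ∑ i, d i) : (capped n d).Nonempty := by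
  have hpos : 0 < ∑ i, d i := by linarith
  refine ⟨fun i => d i / ∑ j, d j, fun i => div_nonneg (hd i) hpos.le,
    fun i => div_le_self (hd i) hds, ?_⟩
  rw [← sum_div, div_self hpos.ne']

theorem isCompact_capped (d : Fin n → ℝ) : IsCompact (capped n d) := by
  have hclosed : IsClosed (capped n d) := by
    have : capped n d =
        (⋂ i, {x | 0 ≤ x i}) ∩ (⋂ i, {x | x i ≤ d i}) ∩ {x | ∑ i, x i = 1} := by
      ext; simp [capped, and_assoc]
    rw [this]
    exact ((isClosed_iInter fun i => isClosed_le continuous_const (continuous_apply i)).inter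
      (isClosed_iInter fun i => isClosed_le (continuous_apply i) continuous_const)).inter
      (isClosed_eq (continuous_finsetSum _ fun i _ => continuous_apply i) continuous_const)
  exact (isCompact_Icc (a := 0) (b := d)).of_isClosed_subset hclosed fun x hx => ⟨hx.1, hx.2.1⟩

theorem neg_dotProduct_add_le_dotProduct {x y c : Fin n → ℝ} {z : ℝ} (hx : x ∈ capped n d)
    (hy : ∀ i, 0 ≤ y i) (hyz : ∀ i, -y i + z ≤ c i) : -(d ⬝ᵥ y) + z ≤ x ⬝ᵥ c := by
  obtain ⟨hx0, hxd, hx1⟩ := hx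
  have hxy : x ⬝ᵥ y ≤ d ⬝ᵥ y :=
    sum_le_sum fun i _ => mul_le_mul_of_nonneg_right (hxd i) (hy i)
  calc -(d ⬝ᵥ y) + z ≤ -(x ⬝ᵥ y) + (∑ i, x i) * z := by rw [hx1, one_mul]; linarith
    _ = ∑ i, x i * (-y i + z) := by
      simp only [dotProduct, mul_add, sum_add_distrib, mul_neg, sum_neg_distrib, sum_mul]
    _ ≤ x ⬝ᵥ c := sum_le_sum fun i _ => mul_le_mul_of_nonneg_left (hyz i) (hx0 i)

/-- Moving mass from `j` to `i` would decrease `xᵀc`. -/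
theorem eq_of_isMinOn_dotProduct_of_lt {x c : Fin n → ℝ} (hmin : IsMinOn (· ⬝ᵥ c) (capped n d) x)
    (hx : x ∈ capped n d) {i j : Fin n} (hj : 0 < x j) (hij : c i < c j) : x i = d i := by
  obtain ⟨hx0, hxd, hx1⟩ := hx
  by_contra hne
  have hi : x i < d i := lt_of_le_of_ne (hxd i) hne
  set ε := min (d i - x i) (x j)
  have hε : 0 < ε := lt_min (sub_pos.2 hi) hj
  set x' := x + ε • (Pi.single i 1 - Pi.single j 1)
  have hx' : x' ∈ capped n d := by
    have hεi : ε ≤ d i - x i := min_le_left _ _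
    have hεj : ε ≤ x j := min_le_right _ _
    refine ⟨fun k => ?_, fun k => ?_, ?_⟩
    · simp only [x', Pi.add_apply, Pi.smul_apply, Pi.sub_apply, Pi.single_apply, smul_eq_mul]
      split_ifs <;> subst_vars <;> linarith [hx0 k]
    · simp only [x', Pi.add_apply, Pi.smul_apply, Pi.sub_apply, Pi.single_apply, smul_eq_mul]
      split_ifs <;> subst_vars <;> linarith [hxd k]
    · simp [x', sum_add_distrib, ← mul_sum, hx1]
  have hval : x' ⬝ᵥ c = x ⬝ᵥ c + ε * (c i - c j) := by
    simp [x', add_dotProduct, smul_dotProduct, sub_dotProduct, single_dotProduct]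
  have hle : x ⬝ᵥ c ≤ x' ⬝ᵥ c := hmin hx'
  have hgain : 0 < ε * (c j - c i) := mul_pos hε (sub_pos.2 hij)
  linarith

theorem exists_capped_dual_eq (hd : ∀ i, 0 ≤ d i) (hds : 1 ≤ ∑ i, d i) (c : Fin n → ℝ) :
    ∃ x ∈ capped n d, ∃ (y : Fin n → ℝ) (z : ℝ),
      (∀ i, 0 ≤ y i) ∧ (∀ i, -y i + z ≤ c i) ∧ -(d ⬝ᵥ y) + z = x ⬝ᵥ c := by
  obtain ⟨x, hx, hmin⟩ := (isCompact_capped d).exists_isMinOn (capped_nonempty hd hds)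
    (continuous_id.dotProduct continuous_const).continuousOn
  have hx0 : ∀ j, 0 ≤ x j := hx.1
  have hsupp : (univ.filter fun j => 0 < x j).Nonempty := by
    by_contra hempty
    rw [not_nonempty_iff_eq_empty, filter_eq_empty_iff] at hempty
    have : ∑ j, x j = 0 :=
      sum_eq_zero fun j _ => le_antisymm (not_lt.1 (hempty (mem_univ j))) (hx0 j)
    linarith [hx.2.2]
  obtain ⟨j₀, hj₀, hmax⟩ := exists_max_image _ c hsupp
  set t := c j₀
  refine ⟨x, hx, fun j => max (t - c j) 0, t, fun j => le_max_right _ _,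
    fun j => by linarith [le_max_left (t - c j) 0], ?_⟩
  -- complementary slackness
  have hslack : ∀ j, x j * c j = x j * t - d j * max (t - c j) 0 := by
    intro j
    rcases lt_or_ge (c j) t with hlt | hge
    · rw [eq_of_isMinOn_dotProduct_of_lt hmin hx (mem_filter.1 hj₀).2 hlt,
        max_eq_left (by linarith)]
      ring
    · rw [max_eq_right (by linarith), mul_zero, sub_zero]
      rcases (hx0 j).eq_or_lt with hzero | hpos
      · rw [← hzero, zero_mul, zero_mul]
      · rw [le_antisymm (hmax j (mem_filter.2 ⟨mem_univ j, hpos⟩)) hge]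
  simp only [dotProduct, hslack, sum_sub_distrib, ← sum_mul, hx.2.2]
  ring

theorem exists_dual_eq_sInf (hd : ∀ i, 0 ≤ d i) (hds : 1 ≤ ∑ i, d i) (c : Fin n → ℝ) :
    ∃ (y : Fin n → ℝ) (z : ℝ), (∀ i, 0 ≤ y i) ∧ (∀ i, -y i + z ≤ c i) ∧
      -(d ⬝ᵥ y) + z = sInf {w | ∃ x ∈ capped n d, w = x ⬝ᵥ c} := by
  obtain ⟨x, hx, y, z, hy, hyz, hval⟩ := exists_capped_dual_eq hd hds c
  have hleast : IsLeast {w | ∃ x ∈ capped n d, w = x ⬝ᵥ c} (-(d ⬝ᵥ y) + z) := by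
    refine ⟨⟨x, hx, hval⟩, ?_⟩
    rintro w ⟨x', hx', rfl⟩
    exact neg_dotProduct_add_le_dotProduct hx' hy hyz
  exact ⟨y, z, hy, hyz, hleast.csInf_eq.symm⟩

theorem le_sInf_of_dual_feasible (hd : ∀ i, 0 ≤ d i) (hds : 1 ≤ ∑ i, d i)
    {y c : Fin n → ℝ} {z : ℝ} (hy : ∀ i, 0 ≤ y i) (hyz : ∀ i, -y i + z ≤ c i) :
    -(d ⬝ᵥ y) + z ≤ sInf {w | ∃ x ∈ capped n d, w = x ⬝ᵥ c} := by
  obtain ⟨x, hx⟩ := capped_nonempty hd hds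
  refine le_csInf ⟨_, x, hx, rfl⟩ ?_
  rintro w ⟨x', hx', rfl⟩
  exact neg_dotProduct_add_le_dotProduct hx' hy hyz

theorem forall_capped_mulVec_le_iff (hd : ∀ i, 0 ≤ d i) (hds : 1 ≤ ∑ i, d i)
    (M : Matrix (Fin n) (Fin n) ℝ) :
    (∀ x ∈ capped n d, ∀ i, (M *ᵥ x) i ≤ d i) ↔
      ∃ (S K : Matrix (Fin n) (Fin n) ℝ) (s : Fin n → ℝ),
        (∀ i j, 0 ≤ S i j) ∧ (∀ i j, 0 ≤ K i j) ∧
        K = M + S + Matrix.of (fun i (_ : Fin n) => s i) ∧ ∀ i, (K *ᵥ d) i ≤ s i + d i := by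
  constructor
  · intro hM
    -- row `i` of `K` and `s i` form an optimal dual solution of `max_{x ∈ X} (M *ᵥ x) i`
    choose x hx y z hy hyz hval using fun i => exists_capped_dual_eq hd hds (-M i)
    refine ⟨Matrix.of fun i j => y i j - z i - M i j, Matrix.of y, z, fun i j => ?_,
      fun i j => hy i j, ?_, fun i => ?_⟩
    · have := hyz i j
      rw [Pi.neg_apply] at this
      rw [of_apply]
      linarith
    · ext i j
      simp
    · have hxM : M i ⬝ᵥ x i ≤ d i := hM (x i) (hx i) i
      have hval' := hval i
      rw [dotProduct_neg, dotProduct_comm (x i)] at hval'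
      change y i ⬝ᵥ d ≤ z i + d i
      rw [dotProduct_comm]
      linarith
  · rintro ⟨S, K, s, hS, hK, hKeq, hKd⟩ x ⟨hx0, hxd, hx1⟩ i
    have hMx : (M *ᵥ x) i = (K *ᵥ x) i - (S *ᵥ x) i - s i := by
      rw [hKeq]
      simp only [mulVec, dotProduct, Matrix.add_apply, of_apply, add_mul, sum_add_distrib, ← mul_sum,
        hx1]
      ring
    have hKx : (K *ᵥ x) i ≤ (K *ᵥ d) i :=
      show ∑ j, K i j * x j ≤ ∑ j, K i j * d j from sum_le_sum fun j _ => mul_le_mul_of_nonneg_left (hxd j) (hK i j)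
    have hSx : 0 ≤ (S *ᵥ x) i := show 0 ≤ ∑ j, S i j * x j from sum_nonneg fun j _ => mul_nonneg (hS i j) (hx0 j)
    linarith [hKd i]

end CappedSimplex

theorem stmt14_general {n p : ℕ} (d : Fin n → ℝ)
    (hd : ∀ i, 0 ≤ d i) (hds : 1 ≤ ∑ i, d i)
    (prob : Fin n → Fin n → Fin p → ℝ)
    (R : Fin n → Fin p → ℝ) (Uhat : Fin n → ℝ) :
    sSup {v : ℝ | ∃ Q : Fin n → Fin p → ℝ,
        (rowStoch Q ∧ ∀ x ∈ capped n d, ∀ i, (Mof prob Q).mulVec x i ≤ d i) ∧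
        v = sInf {w : ℝ | ∃ x ∈ capped n d,
          w = x ⬝ᵥ (rvec R Q + (Mof prob Q)ᵀ.mulVec Uhat)}}
      = sSup {v : ℝ | ∃ (Q : Fin n → Fin p → ℝ) (y : Fin n → ℝ) (z : ℝ)
          (S K : Matrix (Fin n) (Fin n) ℝ) (s : Fin n → ℝ),
        rowStoch Q ∧
        (∀ i, 0 ≤ y i) ∧
        (∀ i j, 0 ≤ S i j) ∧ (∀ i j, 0 ≤ K i j) ∧
        K = Mof prob Q + S + Matrix.of (fun i (_ : Fin n) => s i) ∧
        (∀ i, K.mulVec d i ≤ s i + d i) ∧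
        (∀ i, -y i + z ≤ (rvec R Q + (Mof prob Q)ᵀ.mulVec Uhat) i) ∧
        v = -(d ⬝ᵥ y) + z} := by
  apply csSup_eq_csSup_of_forall_exists_le
  · rintro v ⟨Q, ⟨hQ, hQC⟩, rfl⟩
    obtain ⟨S, K, s, hS, hK, hKeq, hKd⟩ := (forall_capped_mulVec_le_iff hd hds _).1 hQC
    obtain ⟨y, z, hy, hyz, hval⟩ := exists_dual_eq_sInf hd hds
      (rvec R Q + (Mof prob Q)ᵀ *ᵥ Uhat)
    exact ⟨_, ⟨Q, y, z, S, K, s, hQ, hy, hS, hK, hKeq, hKd, hyz, hval.symm⟩, le_rfl⟩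
  · rintro v ⟨Q, y, z, S, K, s, hQ, hy, hS, hK, hKeq, hKd, hyz, rfl⟩
    have hQC := (forall_capped_mulVec_le_iff hd hds _).2 ⟨S, K, s, hS, hK, hKeq, hKd⟩
    exact ⟨_, ⟨Q, ⟨hQ, hQC⟩, rfl⟩, le_sInf_of_dual_feasible hd hds hy hyz⟩

/-- max-min as an LP: `max_{Q∈C} min_{x∈X} xᵀ(r(Q) + M(Q)ᵀÛ)`
has the same optimal value as the LP maximizing `-dᵀy + z` subject to
`M = ∑ₖ Gₖ ⊙ (1(Qeₖ)ᵀ)`, `r = (R ⊙ Q)1`, `-y + z·1 ≤ r + MᵀÛ`,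
`K = M + S + s·1ᵀ`, `s + d ≥ Kd`, `Q1 = 1`, `Q, y, S, K ≥ 0`. -/
theorem stmt14 {n p : ℕ} (d : Fin n → ℝ)
    (hd : ∀ i, 0 ≤ d i) (hds : 1 ≤ ∑ i, d i)
    (prob : Fin n → Fin n → Fin p → ℝ)
    (hG : ∀ k : Fin p, colStoch (Matrix.of fun i j => prob i j k))
    (R : Fin n → Fin p → ℝ) (Uhat : Fin n → ℝ)
    (hCne : ∃ Q : Fin n → Fin p → ℝ, rowStoch Q ∧
      ∀ x ∈ capped n d, ∀ i, (Mof prob Q).mulVec x i ≤ d i) :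
    sSup {v : ℝ | ∃ Q : Fin n → Fin p → ℝ,
        (rowStoch Q ∧ ∀ x ∈ capped n d, ∀ i, (Mof prob Q).mulVec x i ≤ d i) ∧
        v = sInf {w : ℝ | ∃ x ∈ capped n d,
          w = x ⬝ᵥ (rvec R Q + (Mof prob Q)ᵀ.mulVec Uhat)}}
      = sSup {v : ℝ | ∃ (Q : Fin n → Fin p → ℝ) (y : Fin n → ℝ) (z : ℝ)
          (S K : Matrix (Fin n) (Fin n) ℝ) (s : Fin n → ℝ),
        rowStoch Q ∧
        (∀ i, 0 ≤ y i) ∧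
        (∀ i j, 0 ≤ S i j) ∧ (∀ i j, 0 ≤ K i j) ∧
        K = Mof prob Q + S + Matrix.of (fun i (_ : Fin n) => s i) ∧
        (∀ i, K.mulVec d i ≤ s i + d i) ∧
        (∀ i, -y i + z ≤ (rvec R Q + (Mof prob Q)ᵀ.mulVec Uhat) i) ∧
        v = -(d ⬝ᵥ y) + z} :=
  stmt14_general d hd hds prob R Uhat
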